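/- Suppose Y_n = X_nβ + σZ_n with X_n of full column rank and fix Y_n. If Z_n is distributed as the standard n-dimensional Gaussian restricted (truncated) to the affine set {z : R(Y_n − σz) = 0} (where R = I − X(XᵀX)⁻¹Xᵀ), then β := (XᵀX)⁻¹Xᵀ(Y_n − σZ_n) has distribution N((XᵀX)⁻¹XᵀY_n, σ²(XᵀX)⁻¹). -/

import Mathlib

/-!
Parametrise the truncated Gaussian as z = z₀ + V(-Vᵀz₀ + w) with w standard Gaussian on ℝᵖ.
Since X = VC and VᵀV = 1 we have XᵀVVᵀ = Xᵀ, hence (XᵀX)⁻¹Xᵀ(Y - σz) = m - σNw with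
N = (XᵀX)⁻¹XᵀV. So ℓ ⬝ b(z) is the affine functional ℓ ⬝ m - σ(ℓN) ⬝ w of a standard Gaussian
vector, which is Gaussian with variance σ²|ℓN|² = σ²ℓᵀ(XᵀX)⁻¹ℓ because NNᵀ = (XᵀX)⁻¹.
-/

open Matrix MeasureTheory ProbabilityTheory

lemma map_const_add_dotProduct_pi_gaussianReal {ι : Type*} [Fintype ι] (c : ℝ) (a : ι → ℝ) :
    (Measure.pi fun _ : ι => gaussianReal 0 1).map (fun w => c + a ⬝ᵥ w)
      = gaussianReal c (a ⬝ᵥ a).toNNReal := by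
  have hdot : (fun w : ι → ℝ => a ⬝ᵥ w) = innerSL ℝ (WithLp.toLp 2 a) ∘ WithLp.toLp 2 := by
    ext w; simp [dotProduct, EuclideanSpace.inner_eq_star_dotProduct, mul_comm]
  have hcentered : (Measure.pi fun _ : ι => gaussianReal 0 1).map (fun w => a ⬝ᵥ w)
      = gaussianReal 0 (a ⬝ᵥ a).toNNReal := by
    rw [hdot, ← Measure.map_map (by fun_prop) (by fun_prop), map_pi_eq_stdGaussian,
      IsGaussian.map_eq_gaussianReal, integral_strongDual_stdGaussian,
      variance_dual_stdGaussian, innerSL_apply_norm, EuclideanSpace.real_norm_sq_eq]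
    simp [dotProduct, sq]
  rw [show (fun w => c + a ⬝ᵥ w) = (c + ·) ∘ (a ⬝ᵥ ·) from rfl,
    ← Measure.map_map (by fun_prop) (by fun_prop), hcentered, gaussianReal_map_const_add, zero_add]

namespace Matrix

variable {R : Type*} [CommRing R] {n p q : Type*} [Fintype n] [Fintype q]

lemma dotProduct_mul_transpose_mulVec [Fintype p] (N : Matrix p q R) (ℓ : p → R) :
    ℓ ⬝ᵥ (N * Nᵀ) *ᵥ ℓ = (ℓ ᵥ* N) ⬝ᵥ (ℓ ᵥ* N) := by
  rw [← mulVec_mulVec, dotProduct_mulVec, mulVec_transpose]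

variable [DecidableEq q] {X : Matrix n p R} {V : Matrix n q R} {C : Matrix q p R}

lemma transpose_mul_mul_transpose_of_eq_mul (hV : Vᵀ * V = 1) (hXV : X = V * C) :
    Xᵀ * V * Vᵀ = Xᵀ := by
  rw [hXV, transpose_mul, Matrix.mul_assoc Cᵀ, hV, Matrix.mul_one]

lemma inv_gram_mul_transpose_mul_mul_transpose [Fintype p] [DecidableEq p]
    (hX : IsUnit (Xᵀ * X).det) (hV : Vᵀ * V = 1) (hXV : X = V * C) :
    (Xᵀ * X)⁻¹ * Xᵀ * V * ((Xᵀ * X)⁻¹ * Xᵀ * V)ᵀ = (Xᵀ * X)⁻¹ := by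
  have hsymm : (Xᵀ * X)⁻¹ᵀ = (Xᵀ * X)⁻¹ := by
    rw [transpose_nonsing_inv, transpose_mul, transpose_transpose]
  calc (Xᵀ * X)⁻¹ * Xᵀ * V * ((Xᵀ * X)⁻¹ * Xᵀ * V)ᵀ
      = (Xᵀ * X)⁻¹ * (Xᵀ * V * Vᵀ) * X * (Xᵀ * X)⁻¹ᵀ := by
        simp only [transpose_mul, transpose_transpose, Matrix.mul_assoc]
    _ = (Xᵀ * X)⁻¹ := by
        rw [transpose_mul_mul_transpose_of_eq_mul hV hXV, Matrix.mul_assoc _ Xᵀ X,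
          nonsing_inv_mul _ hX, Matrix.one_mul, hsymm]

end Matrix

theorem truncated_gaussian_pushforward_beta_general (n p : ℕ)
    (X : Matrix (Fin n) (Fin p) ℝ) (Y : Fin n → ℝ)
    (hX : IsUnit (Xᵀ * X).det) (σ : ℝ) (hσ : 0 < σ)
    (V : Matrix (Fin n) (Fin p) ℝ) (horth : Vᵀ * V = 1)
    (C : Matrix (Fin p) (Fin p) ℝ) (hXV : X = V * C) :
    let z₀ : Fin n → ℝ := σ⁻¹ • Y
    -- law of the truncated standard Gaussian on the affine set {z₀ + V u},
    -- expressed in the orthonormal coordinates u as N(-Vᵀz₀, I_p):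
    let νu : Measure (Fin p → ℝ) :=
      Measure.map (fun w => (fun i => -(Vᵀ.mulVec z₀) i + w i))
        (Measure.pi fun _ : Fin p => gaussianReal 0 1)
    let μZ : Measure (Fin n → ℝ) := Measure.map (fun u => z₀ + V.mulVec u) νu
    let b : (Fin n → ℝ) → Fin p → ℝ :=
      fun z => (Xᵀ * X)⁻¹.mulVec (Xᵀ.mulVec (Y - σ • z))
    let m : Fin p → ℝ := (Xᵀ * X)⁻¹.mulVec (Xᵀ.mulVec Y)
    let Cov : Matrix (Fin p) (Fin p) ℝ := σ ^ 2 • (Xᵀ * X)⁻¹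
    ∀ ℓ : Fin p → ℝ,
      Measure.map (fun z => ∑ i, ℓ i * b z i) μZ =
        gaussianReal (∑ i, ℓ i * m i) (Real.toNNReal (ℓ ⬝ᵥ Cov.mulVec ℓ)) := by
  intro z₀ νu μZ b m Cov ℓ
  set N := (Xᵀ * X)⁻¹ * Xᵀ * V
  have hz₀ : σ • z₀ = Y := smul_inv_smul₀ hσ.ne' Y
  have hNV : (Xᵀ * X)⁻¹ * Xᵀ * V * Vᵀ = (Xᵀ * X)⁻¹ * Xᵀ := by
    rw [Matrix.mul_assoc _ Xᵀ, Matrix.mul_assoc, transpose_mul_mul_transpose_of_eq_mul horth hXV]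
  have hb : ∀ w, b (z₀ + V *ᵥ (-(Vᵀ *ᵥ z₀) + w)) = m - σ • N *ᵥ w := by
    intro w
    have hres : Y - σ • (z₀ + V *ᵥ (-(Vᵀ *ᵥ z₀) + w)) = V *ᵥ Vᵀ *ᵥ Y - σ • V *ᵥ w := by
      rw [← hz₀]
      simp only [mulVec_add, mulVec_neg, mulVec_smul]
      module
    change (Xᵀ * X)⁻¹ *ᵥ Xᵀ *ᵥ (Y - σ • _) = _
    rw [hres]
    simp only [m, N, mulVec_sub, mulVec_smul, mulVec_mulVec, ← Matrix.mul_assoc, hNV]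
  have hcomp : (fun z => ∑ i, ℓ i * b z i) ∘ (fun u => z₀ + V *ᵥ u) ∘
      (fun w i => -(Vᵀ *ᵥ z₀) i + w i) = fun w => ∑ i, ℓ i * m i + (-σ • (ℓ ᵥ* N)) ⬝ᵥ w := by
    funext w
    change ℓ ⬝ᵥ b (z₀ + V *ᵥ (-(Vᵀ *ᵥ z₀) + w)) = ℓ ⬝ᵥ m + _
    rw [hb, dotProduct_sub, dotProduct_smul, dotProduct_mulVec ℓ N w, neg_smul, neg_dotProduct,
      smul_dotProduct, sub_eq_add_neg]
  have hvar : ℓ ⬝ᵥ Cov *ᵥ ℓ = (-σ • (ℓ ᵥ* N)) ⬝ᵥ (-σ • (ℓ ᵥ* N)) := by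
    change ℓ ⬝ᵥ (σ ^ 2 • (Xᵀ * X)⁻¹) *ᵥ ℓ = _
    rw [← inv_gram_mul_transpose_mul_mul_transpose hX horth hXV, smul_mulVec, dotProduct_smul,
      dotProduct_mul_transpose_mulVec, smul_dotProduct, dotProduct_smul, smul_eq_mul, smul_eq_mul,
      smul_eq_mul]
    ring
  rw [Measure.map_map (by fun_prop) (by fun_prop), Measure.map_map (by fun_prop) (by fun_prop),
    Function.comp_assoc, hcomp, map_const_add_dotProduct_pi_gaussianReal, hvar]

theorem truncated_gaussian_pushforward_beta (n p : ℕ)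
    (X : Matrix (Fin n) (Fin p) ℝ) (Y : Fin n → ℝ)
    (hX : IsUnit (Xᵀ * X).det) (σ : ℝ) (hσ : 0 < σ)
    (V : Matrix (Fin n) (Fin p) ℝ) (horth : Vᵀ * V = 1)
    (B C : Matrix (Fin p) (Fin p) ℝ) (hVX : V = X * B) (hXV : X = V * C) :
    let z₀ : Fin n → ℝ := σ⁻¹ • Y
    -- law of the truncated standard Gaussian on the affine set {z₀ + V u},
    -- expressed in the orthonormal coordinates u as N(-Vᵀz₀, I_p):
    let νu : Measure (Fin p → ℝ) :=
      Measure.map (fun w => (fun i => -(Vᵀ.mulVec z₀) i + w i))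
        (Measure.pi fun _ : Fin p => gaussianReal 0 1)
    let μZ : Measure (Fin n → ℝ) := Measure.map (fun u => z₀ + V.mulVec u) νu
    let b : (Fin n → ℝ) → Fin p → ℝ :=
      fun z => (Xᵀ * X)⁻¹.mulVec (Xᵀ.mulVec (Y - σ • z))
    let m : Fin p → ℝ := (Xᵀ * X)⁻¹.mulVec (Xᵀ.mulVec Y)
    let Cov : Matrix (Fin p) (Fin p) ℝ := σ ^ 2 • (Xᵀ * X)⁻¹
    ∀ ℓ : Fin p → ℝ,
      Measure.map (fun z => ∑ i, ℓ i * b z i) μZ =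
        gaussianReal (∑ i, ℓ i * m i) (Real.toNNReal (ℓ ⬝ᵥ Cov.mulVec ℓ)) :=
  truncated_gaussian_pushforward_beta_general n p X Y hX σ hσ V horth C hXV
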